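/- Let S' be a non-decreasing integer sequence with at least one repeated value, k the smallest index with s_k = s_{k+1}, and m the number of occurrences of the value s_k. Let S'' be obtained from S' by decreasing s_k by 1 and increasing s_{k+m-1} by 1. Then c(S') - c(S'') = 1, where c(S) = C(n,3) - Σ_i C(s_i,2). -/
import Mathlib


open Finset

/-- A tournament on `Fin n`: irreflexive and for distinct vertices exactly one direction. -/
def IsTournament {n : ℕ} (r : Fin n → Fin n → Bool) : Prop :=
  (∀ i, r i i = false) ∧ ∀ i j : Fin n, i ≠ j → (r i j = !(r j i))

/-- The score (out-degree) of a vertex. -/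
def score {n : ℕ} (r : Fin n → Fin n → Bool) (i : Fin n) : ℕ :=
  (Finset.univ.filter (fun j => r i j = true)).card

/-- `s` (restricted to indices `< n`) is the non-decreasing score sequence of tournament `r`. -/
def IsScoreSeqOf {n : ℕ} (s : ℕ → ℤ) (r : Fin n → Fin n → Bool) : Prop :=
  (∀ i j : Fin n, i ≤ j → s i.1 ≤ s j.1) ∧
  ∃ σ : Equiv.Perm (Fin n), ∀ i : Fin n, (score r (σ i) : ℤ) = s i.1

/-- `s` is the score sequence of some `n`-tournament. -/
def IsScoreSeq (n : ℕ) (s : ℕ → ℤ) : Prop :=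
  ∃ r : Fin n → Fin n → Bool, IsTournament r ∧ IsScoreSeqOf s r

/-- Strong connectivity: a directed path from any vertex to any other. -/
def IsStrong {n : ℕ} (r : Fin n → Fin n → Bool) : Prop :=
  ∀ i j : Fin n, Relation.ReflTransGen (fun a b => r a b = true) i j

/-- The regular (n odd) resp. nearly-regular (n even) sequence. -/
def regSeq (n : ℕ) (i : ℕ) : ℤ :=
  if Odd n then ((n : ℤ) - 1) / 2
  else if i < n / 2 then ((n : ℤ) - 2) / 2 else (n : ℤ) / 2

/-- `x * (x-1) / 2`, the binomial coefficient `C(x,2)` extended to integers. -/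
def intChoose2 (x : ℤ) : ℤ := x * (x - 1) / 2

lemma two_mul_ic2 (x : ℤ) : 2 * intChoose2 x = x * (x - 1) := by
  have h : (2:ℤ) ∣ x * (x - 1) := by
    have := Int.even_mul_succ_self (x - 1)
    simp only [sub_add_cancel] at this
    exact (by simpa [mul_comm] using this : Even (x * (x-1))).two_dvd
  unfold intChoose2
  exact Int.mul_ediv_cancel' h

lemma ic2_sub_one (x : ℤ) : intChoose2 (x - 1) - intChoose2 x = -(x - 1) := by
  have h1 := two_mul_ic2 (x - 1)
  have h2 := two_mul_ic2 x
  nlinarith [h1, h2]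

lemma ic2_add_one (x : ℤ) : intChoose2 (x + 1) - intChoose2 x = x := by
  have h1 := two_mul_ic2 (x + 1)
  have h2 := two_mul_ic2 x
  nlinarith [h1, h2]


theorem up_jump_decreases_c_by_one (n : ℕ) (s : ℕ → ℤ)
    (hmono : ∀ i j : ℕ, i ≤ j → j < n → s i ≤ s j)
    (k : ℕ) (hk : k + 1 < n) (hkk : s k = s (k + 1))
    (hkmin : ∀ j : ℕ, j + 1 < n → s j = s (j + 1) → k ≤ j)
    (m : ℕ) (hm : m = ((Finset.range n).filter (fun i => s i = s k)).card)
    (s'' : ℕ → ℤ)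
    (hs'' : ∀ i, s'' i =
      if i = k then s k - 1 else if i = k + m - 1 then s (k + m - 1) + 1 else s i) :
    ((n.choose 3 : ℤ) - ∑ i ∈ Finset.range n, intChoose2 (s i))
      - ((n.choose 3 : ℤ) - ∑ i ∈ Finset.range n, intChoose2 (s'' i)) = 1 := by
  set F := (Finset.range n).filter (fun i => s i = s k) with hF
  -- every element of F is ≥ k
  have hge : ∀ i ∈ F, k ≤ i := by
    intro i hi
    rw [hF, Finset.mem_filter, Finset.mem_range] at hi
    by_contra hlt
    push_neg at hlt
    have h1 : i + 1 ≤ k := hlt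
    have hik : s i ≤ s (i+1) := hmono i (i+1) (by omega) (by omega)
    have hik2 : s (i+1) ≤ s k := hmono (i+1) k h1 (by omega)
    have : s i = s (i+1) := le_antisymm hik (by omega)
    have := hkmin i (by omega) this
    omega
  have hkF : k ∈ F := by
    rw [hF, Finset.mem_filter, Finset.mem_range]; exact ⟨by omega, rfl⟩
  have hk1F : k + 1 ∈ F := by
    rw [hF, Finset.mem_filter, Finset.mem_range]; exact ⟨hk, hkk.symm⟩
  have hFne : F.Nonempty := ⟨k, hkF⟩
  set M := F.max' hFne with hM
  have hMF : M ∈ F := F.max'_mem hFne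
  have hMn : M < n := by
    have := hMF; rw [hF, Finset.mem_filter, Finset.mem_range] at this; exact this.1
  have hsM : s M = s k := by
    have := hMF; rw [hF, Finset.mem_filter] at this; exact this.2
  have hsub : F ⊆ Finset.Icc k M := by
    intro i hi
    rw [Finset.mem_Icc]
    exact ⟨hge i hi, F.le_max' i hi⟩
  have hcard : m ≤ M + 1 - k := by
    have := Finset.card_le_card hsub
    rw [Nat.card_Icc] at this
    omega
  have hm2 : 2 ≤ m := by
    have : ({k, k+1} : Finset ℕ) ⊆ F := by
      intro i hi
      simp only [Finset.mem_insert, Finset.mem_singleton] at hi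
      rcases hi with h | h <;> subst h <;> assumption
    have := Finset.card_le_card this
    rw [Finset.card_pair (by omega)] at this
    omega
  have hkM : k + 1 ≤ M := by omega
  have hkm1 : k + m - 1 ≤ M := by omega
  have hkm1n : k + m - 1 < n := by omega
  have hskm1 : s (k + m - 1) = s k := by
    have h1 : s k ≤ s (k + m - 1) := hmono k (k+m-1) (by omega) hkm1n
    have h2 : s (k + m - 1) ≤ s M := hmono (k+m-1) M hkm1 hMn
    omega
  have hne : k ≠ k + m - 1 := by omega
  -- sum of differences
  have hsum : ∑ i ∈ Finset.range n, (intChoose2 (s'' i) - intChoose2 (s i)) = 1 := by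
    have hsubset : ({k, k + m - 1} : Finset ℕ) ⊆ Finset.range n := by
      intro i hi
      simp only [Finset.mem_insert, Finset.mem_singleton] at hi
      rw [Finset.mem_range]
      rcases hi with h | h <;> omega
    rw [← Finset.sum_subset hsubset]
    · rw [Finset.sum_pair hne]
      have e1 : s'' k = s k - 1 := by rw [hs'']; simp
      have e2 : s'' (k + m - 1) = s k + 1 := by
        rw [hs'', if_neg (Ne.symm hne), if_pos rfl, hskm1]
      rw [e1, e2, hskm1]
      have := ic2_sub_one (s k)
      have := ic2_add_one (s k)
      linarith
    · intro x _ hx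
      simp only [Finset.mem_insert, Finset.mem_singleton] at hx
      push_neg at hx
      rw [hs'', if_neg hx.1, if_neg hx.2, sub_self]
  rw [Finset.sum_sub_distrib] at hsum
  linarith
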